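/- Let p ≤ q and let a ∈ ℝ^p, b ∈ ℝ^q be positive vectors satisfying e_q(b)/e_p(a) ≤ e_{q−1}(b)/e_{p−1}(a) ≤ … ≤ e_{q−p+1}(b)/e_1(a) ≤ e_{q−p}(b). Define f(μ; x) = Σ_{n≥0} [∏_{i=1}^{p} Γ(a_i+μ+n) / ∏_{j=1}^{q} Γ(b_j+μ+n)] x^n / n!. Then for every x ≥ 0, μ, β ≥ 0 and every positive integer α, f(μ+α; x) f(μ+β; x) − f(μ; x) f(μ+α+β; x) ≥ 0. -/

import Mathlib

open Finset

lemma key_sum (m : ℕ) (P Q : ℕ → ℝ)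
    (hcross : ∀ i j, i ≤ j → j ≤ m + 1 → P i * Q j ≤ P j * Q i) :
    0 ≤ ∑ n ∈ Finset.range (m + 1),
      (P (n + 1) * Q (m - n) - P n * Q (m - n + 1)) /
        ((n.factorial : ℝ) * ((m - n).factorial : ℝ)) := by
  set w : ℕ → ℝ := fun n => ((n.factorial : ℝ) * ((m - n).factorial : ℝ))⁻¹ with hw
  have hwpos : ∀ n, 0 < w n := by
    intro n
    have := n.factorial_pos
    have := (m - n).factorial_pos
    positivity
  have hwsymm : ∀ n, n ≤ m → w (m - n) = w n := by
    intro n hn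
    have e : m - (m - n) = n := by omega
    simp only [hw, e]
    ring
  set d : ℕ → ℝ := fun j => (if j = 0 then 0 else w (j - 1)) - (if j ≤ m then w j else 0)
    with hd
  -- antisymmetry of d
  have hdanti : ∀ j, j ≤ m + 1 → d (m + 1 - j) = -d j := by
    intro j hj
    rcases Nat.eq_zero_or_pos j with hj0 | hj1
    · subst hj0
      simp only [hd]
      have h1 : m + 1 - 0 = m + 1 := rfl
      have h2 : ¬(m + 1 ≤ m) := by omega
      have h3 : m + 1 ≠ 0 := by omega
      have h4 : m + 1 - 1 = m := by omega
      simp only [h1, if_neg h3, if_neg h2, if_pos rfl, h4, sub_zero, zero_sub, neg_neg]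
      simpa using hwsymm 0 (Nat.zero_le m)
    · rcases Nat.lt_or_ge j (m + 1) with hjm | hjm
      · -- 1 ≤ j ≤ m
        have hjle : j ≤ m := by omega
        have h1 : m + 1 - j ≠ 0 := by omega
        have h2 : m + 1 - j ≤ m := by omega
        have h3 : j ≠ 0 := by omega
        have e1 : m + 1 - j - 1 = m - j := by omega
        have e2 : w (m - j) = w j := hwsymm j hjle
        have e3 : m + 1 - j = m - (j - 1) := by omega
        have e4 : w (m - (j - 1)) = w (j - 1) := hwsymm (j - 1) (by omega)
        simp only [hd, if_neg h1, if_pos h2, if_neg h3, if_pos hjle, e1, e2]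
        rw [e3, e4]
        ring
      · have hj1' : j = m + 1 := by omega
        subst hj1'
        simp only [hd]
        have h2 : ¬(m + 1 ≤ m) := by omega
        have h3 : m + 1 ≠ 0 := by omega
        have h4 : m + 1 - 1 = m := by omega
        have h5 : m + 1 - (m + 1) = 0 := by omega
        simp only [h5, if_pos rfl, if_pos (Nat.zero_le m), zero_sub, if_neg h3, if_neg h2,
          sub_zero, h4, neg_neg]
        simpa using (hwsymm 0 (Nat.zero_le m)).symm
  -- sign of d
  have hdpos : ∀ j, j ≤ m + 1 → m + 1 - j ≤ j → 0 ≤ d j := by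
    intro j hj hj2
    rcases Nat.lt_or_ge j (m + 1) with hjm | hjm
    · have hjle : j ≤ m := by omega
      have hj1 : 1 ≤ j := by omega
      obtain ⟨k, rfl⟩ : ∃ k, j = k + 1 := ⟨j - 1, by omega⟩
      have h3 : k + 1 ≠ 0 := by omega
      simp only [hd, if_neg h3, if_pos hjle, Nat.add_sub_cancel, sub_nonneg]
      -- w (k+1) ≤ w k
      have hk1 : k + 1 ≤ m := hjle
      have e1 : m - k = (m - (k + 1)) + 1 := by omega
      have hle : ((k + 1).factorial : ℝ) * ((m - (k + 1)).factorial : ℝ) ≥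
          (k.factorial : ℝ) * ((m - k).factorial : ℝ) := by
        rw [e1, Nat.factorial_succ, Nat.factorial_succ]
        push_cast
        have hcmp : ((m - (k + 1) : ℕ) : ℝ) + 1 ≤ (k : ℝ) + 1 := by
          exact_mod_cast (show m - (k + 1) + 1 ≤ k + 1 by omega)
        have h1 : (0:ℝ) < k.factorial := by exact_mod_cast k.factorial_pos
        have h2 : (0:ℝ) < (m - (k + 1)).factorial := by
          exact_mod_cast (m - (k + 1)).factorial_pos
        nlinarith [mul_le_mul_of_nonneg_right hcmp (mul_pos h1 h2).le]
      have h1 : (0:ℝ) < (k.factorial : ℝ) * ((m - k).factorial : ℝ) := by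
        have := k.factorial_pos
        have := (m - k).factorial_pos
        positivity
      exact inv_anti₀ h1 hle
    · have : j = m + 1 := by omega
      subst this
      have h2 : ¬(m + 1 ≤ m) := by omega
      have h3 : m + 1 ≠ 0 := by omega
      simp only [hd, if_neg h3, if_pos, if_neg h2]
      simp [(hwpos m).le]
  -- rewrite the sum
  have hsum : ∑ n ∈ Finset.range (m + 1),
      (P (n + 1) * Q (m - n) - P n * Q (m - n + 1)) /
        ((n.factorial : ℝ) * ((m - n).factorial : ℝ))
      = ∑ j ∈ Finset.range (m + 2), d j * (P j * Q (m + 1 - j)) := by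
    have split : ∀ j, d j * (P j * Q (m + 1 - j)) =
        (if j = 0 then 0 else w (j - 1)) * (P j * Q (m + 1 - j))
        - (if j ≤ m then w j else 0) * (P j * Q (m + 1 - j)) := by
      intro j; simp only [hd]; ring
    rw [Finset.sum_congr rfl fun j _ => split j, Finset.sum_sub_distrib]
    have h1 : ∑ j ∈ Finset.range (m + 2),
        (if j = 0 then 0 else w (j - 1)) * (P j * Q (m + 1 - j))
        = ∑ n ∈ Finset.range (m + 1), w n * (P (n + 1) * Q (m - n)) := by
      rw [Finset.sum_range_succ']
      have hz : (if (0:ℕ) = 0 then (0:ℝ) else w (0 - 1)) * (P 0 * Q (m + 1 - 0)) = 0 := by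
        simp
      rw [hz, add_zero]
      apply Finset.sum_congr rfl
      intro n _
      have e : m + 1 - (n + 1) = m - n := by omega
      have hne : n + 1 ≠ 0 := by omega
      simp [e, hne]
    have h2 : ∑ j ∈ Finset.range (m + 2),
        (if j ≤ m then w j else 0) * (P j * Q (m + 1 - j))
        = ∑ n ∈ Finset.range (m + 1), w n * (P n * Q (m - n + 1)) := by
      rw [Finset.sum_range_succ]
      have : ¬(m + 1 ≤ m) := by omega
      simp only [if_neg this, zero_mul, add_zero]
      apply Finset.sum_congr rfl
      intro n hn
      have hn' : n ≤ m := by simpa [Nat.lt_succ_iff] using hn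
      have e : m + 1 - n = m - n + 1 := by omega
      simp [if_pos hn', e]
    rw [h1, h2]
    rw [← Finset.sum_sub_distrib]
    apply Finset.sum_congr rfl
    intro n _
    rw [div_eq_mul_inv]
    ring
  rw [hsum]
  -- reflection
  have hrefl : ∑ j ∈ Finset.range (m + 2), d j * (P j * Q (m + 1 - j))
      = ∑ j ∈ Finset.range (m + 2), d (m + 1 - j) * (P (m + 1 - j) * Q j) := by
    have := Finset.sum_range_reflect (fun j => d j * (P j * Q (m + 1 - j))) (m + 2)
    rw [← this]
    apply Finset.sum_congr rfl
    intro j hj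
    have hj' : j ≤ m + 1 := by simpa [Nat.lt_succ_iff] using hj
    have e1 : m + 2 - 1 - j = m + 1 - j := by omega
    have e2 : m + 1 - (m + 1 - j) = j := by omega
    rw [e1, e2]
  have h2S : 0 ≤ (2 : ℝ) * ∑ j ∈ Finset.range (m + 2), d j * (P j * Q (m + 1 - j)) := by
    have : (2 : ℝ) * ∑ j ∈ Finset.range (m + 2), d j * (P j * Q (m + 1 - j))
        = ∑ j ∈ Finset.range (m + 2),
            (d j * (P j * Q (m + 1 - j)) + d (m + 1 - j) * (P (m + 1 - j) * Q j)) := by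
      rw [Finset.sum_add_distrib, ← hrefl]; ring
    rw [this]
    apply Finset.sum_nonneg
    intro j hj
    have hj' : j ≤ m + 1 := by simpa [Nat.lt_succ_iff] using hj
    rw [hdanti j hj']
    have key : d j * (P j * Q (m + 1 - j)) + -d j * (P (m + 1 - j) * Q j)
        = d j * (P j * Q (m + 1 - j) - P (m + 1 - j) * Q j) := by ring
    rw [key]
    rcases le_total j (m + 1 - j) with hc | hc
    · -- d j ≤ 0 and bracket ≤ 0
      have hdj : d j ≤ 0 := by
        have h1 := hdpos (m + 1 - j) (by omega) (by omega)
        rw [hdanti j hj'] at h1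
        linarith
      have hbr : P j * Q (m + 1 - j) - P (m + 1 - j) * Q j ≤ 0 := by
        have := hcross j (m + 1 - j) hc (by omega)
        linarith
      nlinarith
    · have hdj : 0 ≤ d j := hdpos j hj' hc
      have hbr : 0 ≤ P j * Q (m + 1 - j) - P (m + 1 - j) * Q j := by
        have := hcross (m + 1 - j) j hc hj'
        linarith
      exact mul_nonneg hdj hbr
  linarith

open Finset

/-- The `m`-th elementary symmetric polynomial of `a 0, …, a (p-1)`. -/
noncomputable def esymm (p : ℕ) (a : ℕ → ℝ) (m : ℕ) : ℝ :=
  ∑ s ∈ (Finset.range p).powersetCard m, ∏ i ∈ s, a i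

noncomputable def phif (p q : ℕ) (a b : ℕ → ℝ) (t : ℝ) : ℝ :=
  (∏ i ∈ Finset.range p, (a i + t)) / (∏ j ∈ Finset.range q, (b j + t))

lemma esymm_nonneg (p : ℕ) (a : ℕ → ℝ) (ha : ∀ i < p, 0 < a i) (m : ℕ) :
    0 ≤ esymm p a m := by
  apply Finset.sum_nonneg
  intro s hs
  apply Finset.prod_nonneg
  intro i hi
  have hsub := (Finset.mem_powersetCard.mp hs).1
  exact (ha i (Finset.mem_range.mp (hsub hi))).le

lemma esymm_pos (p : ℕ) (a : ℕ → ℝ) (ha : ∀ i < p, 0 < a i) (m : ℕ) (hm : m ≤ p) :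
    0 < esymm p a m := by
  apply Finset.sum_pos
  · intro s hs
    apply Finset.prod_pos
    intro i hi
    have hsub := (Finset.mem_powersetCard.mp hs).1
    exact ha i (Finset.mem_range.mp (hsub hi))
  · exact Finset.powersetCard_nonempty.mpr (by simpa using hm)

lemma prod_esymm (p : ℕ) (a : ℕ → ℝ) (t : ℝ) :
    ∏ i ∈ Finset.range p, (a i + t)
      = ∑ m ∈ Finset.range (p + 1), esymm p a (p - m) * t ^ m := by
  have h1 : ∏ i ∈ Finset.range p, (a i + t)
      = ∑ u ∈ (Finset.range p).powerset, (∏ i ∈ u, a i) * t ^ (p - u.card) := by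
    rw [Finset.prod_add]
    apply Finset.sum_congr rfl
    intro u hu
    have hsub : u ⊆ Finset.range p := Finset.mem_powerset.mp hu
    congr 1
    rw [Finset.prod_const]
    congr 1
    rw [Finset.card_sdiff_of_subset hsub, Finset.card_range]
  rw [h1, Finset.sum_powerset, Finset.card_range]
  have h2 : ∀ j ∈ Finset.range (p + 1),
      ∑ u ∈ (Finset.range p).powersetCard j, (∏ i ∈ u, a i) * t ^ (p - u.card)
        = esymm p a j * t ^ (p - j) := by
    intro j _
    rw [esymm, Finset.sum_mul]
    apply Finset.sum_congr rfl
    intro u hu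
    rw [(Finset.mem_powersetCard.mp hu).2]
  rw [Finset.sum_congr rfl h2]
  rw [← Finset.sum_range_reflect]
  apply Finset.sum_congr rfl
  intro j hj
  have hj' : j ≤ p := by simpa [Nat.lt_succ_iff] using hj
  have e1 : p + 1 - 1 - j = p - j := by omega
  have e2 : p - (p - j) = j := by omega
  rw [e1, e2]

section chain

variable (p q : ℕ) (a b : ℕ → ℝ)

lemma chain_anti (hpq : p ≤ q) (ha : ∀ i < p, 0 < a i) (hb : ∀ j < q, 0 < b j)
    (hchain : ∀ j, 1 ≤ j → j ≤ p →
      esymm q b (q - p + j) / esymm p a j ≤ esymm q b (q - p + j - 1) / esymm p a (j - 1)) :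
    ∀ j j', j ≤ j' → j' ≤ p →
      esymm q b (q - p + j') / esymm p a j' ≤ esymm q b (q - p + j) / esymm p a j := by
  intro j j' hjj' hj'p
  induction j' with
  | zero => have : j = 0 := by omega
            subst this; exact le_refl _
  | succ k ih =>
    rcases Nat.lt_or_ge j (k + 1) with hlt | hge
    · have hstep := hchain (k + 1) (by omega) hj'p
      have e1 : q - p + (k + 1) - 1 = q - p + k := by omega
      have e2 : k + 1 - 1 = k := by omega
      rw [e1, e2] at hstep
      exact le_trans hstep (ih (by omega) (by omega))
    · have : j = k + 1 := by omega
      subst this; exact le_refl _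

lemma coef_cross (hpq : p ≤ q) (ha : ∀ i < p, 0 < a i) (hb : ∀ j < q, 0 < b j)
    (hchain : ∀ j, 1 ≤ j → j ≤ p →
      esymm q b (q - p + j) / esymm p a j ≤ esymm q b (q - p + j - 1) / esymm p a (j - 1)) :
    ∀ m l, m ≤ l → l ≤ q →
      (if l ≤ p then esymm p a (p - l) else 0) * esymm q b (q - m)
        ≤ (if m ≤ p then esymm p a (p - m) else 0) * esymm q b (q - l) := by
  intro m l hml hlq
  by_cases hlp : l ≤ p
  · have hmp : m ≤ p := le_trans hml hlp
    rw [if_pos hlp, if_pos hmp]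
    have hA : ∀ j ≤ p, 0 < esymm p a j := fun j hj => esymm_pos p a ha j hj
    have h := chain_anti p q a b hpq ha hb hchain (p - l) (p - m) (by omega) (by omega)
    have e1 : q - p + (p - l) = q - l := by omega
    have e2 : q - p + (p - m) = q - m := by omega
    rw [e1, e2] at h
    rw [div_le_div_iff₀ (hA (p - m) (by omega)) (hA (p - l) (by omega))] at h
    linarith
  · rw [if_neg hlp, zero_mul]
    apply mul_nonneg
    · split
      · exact (esymm_pos p a ha _ (by omega)).le
      · exact le_refl 0
    · exact esymm_nonneg q b hb _

lemma phif_anti (hpq : p ≤ q) (ha : ∀ i < p, 0 < a i) (hb : ∀ j < q, 0 < b j)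
    (hchain : ∀ j, 1 ≤ j → j ≤ p →
      esymm q b (q - p + j) / esymm p a j ≤ esymm q b (q - p + j - 1) / esymm p a (j - 1))
    {s t : ℝ} (hs : 0 ≤ s) (hst : s ≤ t) :
    phif p q a b t ≤ phif p q a b s := by
  have ht : 0 ≤ t := le_trans hs hst
  have hDpos : ∀ u : ℝ, 0 ≤ u → 0 < ∏ j ∈ Finset.range q, (b j + u) := by
    intro u hu
    apply Finset.prod_pos
    intro j hj
    have := hb j (Finset.mem_range.mp hj)
    linarith
  rw [phif, phif, div_le_div_iff₀ (hDpos t ht) (hDpos s hs)]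
  -- expand everything
  set A : ℕ → ℝ := fun m => if m ≤ p then esymm p a (p - m) else 0 with hA
  set B : ℕ → ℝ := fun m => esymm q b (q - m) with hB
  have hN : ∀ u : ℝ, ∏ i ∈ Finset.range p, (a i + u)
      = ∑ m ∈ Finset.range (q + 1), A m * u ^ m := by
    intro u
    rw [prod_esymm]
    have h1 : ∑ m ∈ Finset.range (q + 1), A m * u ^ m
        = ∑ m ∈ Finset.range (p + 1), A m * u ^ m := by
      symm
      apply Finset.sum_subset (Finset.range_subset_range.mpr (by omega : p + 1 ≤ q + 1))
      intro x _ hnx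
      have hx : ¬(x ≤ p) := by
        intro h
        exact hnx (Finset.mem_range.mpr (by omega))
      simp [hA, hx]
    rw [h1]
    apply Finset.sum_congr rfl
    intro m hm
    have hm' : m ≤ p := by
      have := Finset.mem_range.mp hm
      omega
    simp [hA, hm']
  have hD : ∀ u : ℝ, ∏ j ∈ Finset.range q, (b j + u)
      = ∑ m ∈ Finset.range (q + 1), B m * u ^ m := by
    intro u
    rw [prod_esymm]
  rw [hN t, hN s, hD t, hD s, Finset.sum_mul_sum, Finset.sum_mul_sum]
  have key : ∀ m l, m ≤ l → l ≤ q →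
      A m * t ^ m * (B l * s ^ l) + A l * t ^ l * (B m * s ^ m)
        ≤ A m * s ^ m * (B l * t ^ l) + A l * s ^ l * (B m * t ^ m) := by
    intro m l hml hlq
    have hAB : A l * B m ≤ A m * B l :=
      coef_cross p q a b hpq ha hb hchain m l hml hlq
    have hpow : t ^ m * s ^ l ≤ s ^ m * t ^ l := by
      have h1 : s ^ (l - m) ≤ t ^ (l - m) := pow_le_pow_left₀ hs hst _
      have e : m + (l - m) = l := by omega
      have hts : s ^ l = s ^ m * s ^ (l - m) := by rw [← pow_add, e]
      have htt : t ^ l = t ^ m * t ^ (l - m) := by rw [← pow_add, e]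
      rw [hts, htt]
      have h0 : (0:ℝ) ≤ t ^ m * s ^ m := by positivity
      nlinarith [mul_le_mul_of_nonneg_left h1 h0]
    have hABn : 0 ≤ A l * B m := by
      apply mul_nonneg
      · simp only [hA]
        split
        · exact (esymm_pos p a ha _ (by omega)).le
        · exact le_refl 0
      · exact esymm_nonneg q b hb _
    nlinarith [mul_nonneg (sub_nonneg.2 hAB) (sub_nonneg.2 hpow)]
  have key2 : ∀ m ∈ Finset.range (q + 1), ∀ l ∈ Finset.range (q + 1),
      A m * t ^ m * (B l * s ^ l) + A l * t ^ l * (B m * s ^ m)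
        ≤ A m * s ^ m * (B l * t ^ l) + A l * s ^ l * (B m * t ^ m) := by
    intro m hm l hl
    rcases le_total m l with h | h
    · exact key m l h (by simpa [Nat.lt_succ_iff] using hl)
    · have := key l m h (by simpa [Nat.lt_succ_iff] using hm)
      linarith
  have hdouble : ∑ m ∈ Finset.range (q + 1), ∑ l ∈ Finset.range (q + 1),
        (A m * t ^ m * (B l * s ^ l) + A l * t ^ l * (B m * s ^ m))
      ≤ ∑ m ∈ Finset.range (q + 1), ∑ l ∈ Finset.range (q + 1),
        (A m * s ^ m * (B l * t ^ l) + A l * s ^ l * (B m * t ^ m)) := by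
    apply Finset.sum_le_sum
    intro m hm
    apply Finset.sum_le_sum
    intro l hl
    exact key2 m hm l hl
  have swap1 : ∑ m ∈ Finset.range (q + 1), ∑ l ∈ Finset.range (q + 1),
      A l * t ^ l * (B m * s ^ m)
      = ∑ m ∈ Finset.range (q + 1), ∑ l ∈ Finset.range (q + 1), A m * t ^ m * (B l * s ^ l) :=
    Finset.sum_comm
  have swap2 : ∑ m ∈ Finset.range (q + 1), ∑ l ∈ Finset.range (q + 1),
      A l * s ^ l * (B m * t ^ m)
      = ∑ m ∈ Finset.range (q + 1), ∑ l ∈ Finset.range (q + 1), A m * s ^ m * (B l * t ^ l) :=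
    Finset.sum_comm
  simp only [Finset.sum_add_distrib] at hdouble
  rw [swap1, swap2] at hdouble
  linarith
end chain
/-- `f(μ; x) = Σ_{n≥0} ∏Γ(a_i+μ+n)/∏Γ(b_j+μ+n) · xⁿ/n!`. -/
noncomputable def fμ (p q : ℕ) (a b : ℕ → ℝ) (μ x : ℝ) : ℝ :=
  ∑' n : ℕ, (∏ i ∈ Finset.range p, Real.Gamma (a i + μ + n)) /
      (∏ j ∈ Finset.range q, Real.Gamma (b j + μ + n)) * x ^ n / n.factorial

noncomputable def cf (p q : ℕ) (a b : ℕ → ℝ) (t : ℝ) (n : ℕ) : ℝ :=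
  (∏ i ∈ Finset.range p, Real.Gamma (a i + t + n)) /
    (∏ j ∈ Finset.range q, Real.Gamma (b j + t + n))

section analytic

variable (p q : ℕ) (a b : ℕ → ℝ)

lemma f_eq (t x : ℝ) : fμ p q a b t x = ∑' n : ℕ, cf p q a b t n * x ^ n / n.factorial := rfl

lemma cf_pos (ha : ∀ i < p, 0 < a i) (hb : ∀ j < q, 0 < b j) {t : ℝ} (ht : 0 ≤ t) (n : ℕ) :
    0 < cf p q a b t n := by
  apply div_pos
  · apply Finset.prod_pos
    intro i hi
    apply Real.Gamma_pos_of_pos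
    have := ha i (Finset.mem_range.mp hi)
    have : (0:ℝ) ≤ n := Nat.cast_nonneg n
    linarith [ha i (Finset.mem_range.mp hi)]
  · apply Finset.prod_pos
    intro j hj
    apply Real.Gamma_pos_of_pos
    have : (0:ℝ) ≤ n := Nat.cast_nonneg n
    linarith [hb j (Finset.mem_range.mp hj)]

lemma phif_nonneg (ha : ∀ i < p, 0 < a i) (hb : ∀ j < q, 0 < b j) {t : ℝ} (ht : 0 ≤ t) :
    0 ≤ phif p q a b t := by
  apply div_nonneg
  · apply Finset.prod_nonneg
    intro i hi
    have := ha i (Finset.mem_range.mp hi); linarith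
  · apply Finset.prod_nonneg
    intro j hj
    have := hb j (Finset.mem_range.mp hj); linarith

lemma cf_succ (ha : ∀ i < p, 0 < a i) (hb : ∀ j < q, 0 < b j) {t : ℝ} (ht : 0 ≤ t) (n : ℕ) :
    (∏ i ∈ Finset.range p, Real.Gamma (a i + t + n + 1)) /
      (∏ j ∈ Finset.range q, Real.Gamma (b j + t + n + 1))
      = phif p q a b (t + n) * cf p q a b t n := by
  have hnum : ∏ i ∈ Finset.range p, Real.Gamma (a i + t + n + 1)
      = (∏ i ∈ Finset.range p, (a i + (t + n))) * ∏ i ∈ Finset.range p,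
          Real.Gamma (a i + t + n) := by
    rw [← Finset.prod_mul_distrib]
    apply Finset.prod_congr rfl
    intro i hi
    have hpos : 0 < a i + t + (n:ℝ) := by
      have := ha i (Finset.mem_range.mp hi)
      have : (0:ℝ) ≤ n := Nat.cast_nonneg n
      linarith [ha i (Finset.mem_range.mp hi)]
    rw [Real.Gamma_add_one (ne_of_gt hpos)]
    ring_nf
  have hden : ∏ j ∈ Finset.range q, Real.Gamma (b j + t + n + 1)
      = (∏ j ∈ Finset.range q, (b j + (t + n))) * ∏ j ∈ Finset.range q,
          Real.Gamma (b j + t + n) := by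
    rw [← Finset.prod_mul_distrib]
    apply Finset.prod_congr rfl
    intro j hj
    have hpos : 0 < b j + t + (n:ℝ) := by
      have : (0:ℝ) ≤ n := Nat.cast_nonneg n
      linarith [hb j (Finset.mem_range.mp hj)]
    rw [Real.Gamma_add_one (ne_of_gt hpos)]
    ring_nf
  rw [hnum, hden, phif, cf, div_mul_div_comm]

lemma cf_step (ha : ∀ i < p, 0 < a i) (hb : ∀ j < q, 0 < b j) {t : ℝ} (ht : 0 ≤ t) (n : ℕ) :
    cf p q a b t (n + 1) = phif p q a b (t + n) * cf p q a b t n := by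
  rw [← cf_succ p q a b ha hb ht n, cf]
  congr 1
  · apply Finset.prod_congr rfl
    intro i _
    push_cast
    ring_nf
  · apply Finset.prod_congr rfl
    intro j _
    push_cast
    ring_nf

lemma cf_shift (ha : ∀ i < p, 0 < a i) (hb : ∀ j < q, 0 < b j) {t : ℝ} (ht : 0 ≤ t) (n : ℕ) :
    cf p q a b (t + 1) n = phif p q a b (t + n) * cf p q a b t n := by
  rw [← cf_succ p q a b ha hb ht n, cf]
  congr 1
  · apply Finset.prod_congr rfl
    intro i _
    ring_nf
  · apply Finset.prod_congr rfl
    intro j _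
    ring_nf

variable (hpq : p ≤ q) (ha : ∀ i < p, 0 < a i) (hb : ∀ j < q, 0 < b j)
  (hchain : ∀ j, 1 ≤ j → j ≤ p →
    esymm q b (q - p + j) / esymm p a j ≤ esymm q b (q - p + j - 1) / esymm p a (j - 1))

include hpq ha hb hchain

lemma cf_bound {t : ℝ} (ht : 0 ≤ t) (n : ℕ) :
    cf p q a b t n ≤ cf p q a b t 0 * phif p q a b t ^ n := by
  induction n with
  | zero => simp
  | succ k ih =>
    rw [cf_step p q a b ha hb ht k]
    have h1 : phif p q a b (t + k) ≤ phif p q a b t :=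
      phif_anti p q a b hpq ha hb hchain ht (by
        have : (0:ℝ) ≤ k := Nat.cast_nonneg k
        linarith)
    have h2 : 0 ≤ phif p q a b (t + k) :=
      phif_nonneg p q a b ha hb (by
        have : (0:ℝ) ≤ k := Nat.cast_nonneg k
        linarith)
    have h3 : 0 < cf p q a b t k := cf_pos p q a b ha hb ht k
    calc phif p q a b (t + k) * cf p q a b t k
        ≤ phif p q a b t * (cf p q a b t 0 * phif p q a b t ^ k) := by
          apply mul_le_mul h1 ih h3.le (le_trans h2 h1)
      _ = cf p q a b t 0 * phif p q a b t ^ (k + 1) := by ring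
lemma f_summable {t x : ℝ} (ht : 0 ≤ t) (hx : 0 ≤ x) :
    Summable (fun n : ℕ => cf p q a b t n * x ^ n / n.factorial) := by
  refine Summable.of_nonneg_of_le ?_ ?_
    ((Real.summable_pow_div_factorial (phif p q a b t * x)).mul_left (cf p q a b t 0))
  · intro n
    have := (cf_pos p q a b ha hb ht n).le
    positivity
  · intro n
    have hbnd := cf_bound p q a b hpq ha hb hchain ht n
    have h1 : (0:ℝ) ≤ x ^ n / n.factorial := by positivity
    calc cf p q a b t n * x ^ n / n.factorial
        = cf p q a b t n * (x ^ n / n.factorial) := by ring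
      _ ≤ (cf p q a b t 0 * phif p q a b t ^ n) * (x ^ n / n.factorial) :=
          mul_le_mul_of_nonneg_right hbnd h1
      _ = cf p q a b t 0 * ((phif p q a b t * x) ^ n / n.factorial) := by
          rw [mul_pow]; ring

lemma f_pos {t x : ℝ} (ht : 0 ≤ t) (hx : 0 ≤ x) : 0 < fμ p q a b t x := by
  rw [f_eq]
  apply Summable.tsum_pos (f_summable p q a b hpq ha hb hchain ht hx)
    (fun n => by
      have := (cf_pos p q a b ha hb ht n).le
      positivity) 0
  have h0 : cf p q a b t 0 * x ^ 0 / (Nat.factorial 0 : ℝ) = cf p q a b t 0 := by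
    simp
  rw [h0]
  exact cf_pos p q a b ha hb ht 0

lemma cf_prod {t : ℝ} (ht : 0 ≤ t) {i j : ℕ} (hij : i ≤ j) :
    cf p q a b t j = cf p q a b t i * ∏ l ∈ Finset.Ico i j, phif p q a b (t + l) := by
  induction j, hij using Nat.le_induction with
  | base => simp
  | succ k hk ih =>
    rw [cf_step p q a b ha hb ht k, ih, Finset.prod_Ico_succ_top hk]
    ring

lemma cross_ineq {t β : ℝ} (ht : 0 ≤ t) (hβ : 0 ≤ β) {i j : ℕ} (hij : i ≤ j) :
    cf p q a b t i * cf p q a b (t + β) j ≤ cf p q a b t j * cf p q a b (t + β) i := by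
  have htβ : 0 ≤ t + β := by linarith
  rw [cf_prod p q a b hpq ha hb hchain ht hij,
      cf_prod p q a b hpq ha hb hchain htβ hij]
  have hprod : ∏ l ∈ Finset.Ico i j, phif p q a b (t + β + l)
      ≤ ∏ l ∈ Finset.Ico i j, phif p q a b (t + l) := by
    apply Finset.prod_le_prod
    · intro l _
      apply phif_nonneg p q a b ha hb
      have : (0:ℝ) ≤ l := Nat.cast_nonneg l
      linarith
    · intro l _
      apply phif_anti p q a b hpq ha hb hchain
      · have : (0:ℝ) ≤ l := Nat.cast_nonneg l
        linarith
      · linarith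
  have hPQ : 0 ≤ cf p q a b t i * cf p q a b (t + β) i :=
    mul_nonneg (cf_pos p q a b ha hb ht i).le (cf_pos p q a b ha hb htβ i).le
  calc cf p q a b t i * (cf p q a b (t + β) i * ∏ l ∈ Finset.Ico i j, phif p q a b (t + β + l))
      = (cf p q a b t i * cf p q a b (t + β) i) *
          ∏ l ∈ Finset.Ico i j, phif p q a b (t + β + l) := by ring
    _ ≤ (cf p q a b t i * cf p q a b (t + β) i) *
          ∏ l ∈ Finset.Ico i j, phif p q a b (t + l) :=
        mul_le_mul_of_nonneg_left hprod hPQ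
    _ = cf p q a b t i * (∏ l ∈ Finset.Ico i j, phif p q a b (t + l)) *
          cf p q a b (t + β) i := by ring

lemma step1 {x μ β : ℝ} (hx : 0 ≤ x) (hμ : 0 ≤ μ) (hβ : 0 ≤ β) :
    fμ p q a b μ x * fμ p q a b (μ + β + 1) x
      ≤ fμ p q a b (μ + 1) x * fμ p q a b (μ + β) x := by
  have hμβ : 0 ≤ μ + β := by linarith
  have hμ1 : 0 ≤ μ + 1 := by linarith
  have hμβ1 : 0 ≤ μ + β + 1 := by linarith
  set g : ℝ → ℕ → ℝ := fun t n => cf p q a b t n * x ^ n / n.factorial with hg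
  have hnn : ∀ t, 0 ≤ t → ∀ n, 0 ≤ g t n := by
    intro t ht n
    have := (cf_pos p q a b ha hb ht n).le
    simp only [hg]
    positivity
  have hnorm : ∀ t, 0 ≤ t → Summable (fun n => ‖g t n‖) := by
    intro t ht
    apply (f_summable p q a b hpq ha hb hchain ht hx).congr
    intro n
    exact (Real.norm_of_nonneg (hnn t ht n)).symm
  have hL : fμ p q a b (μ + 1) x * fμ p q a b (μ + β) x
      = ∑' m : ℕ, ∑ k ∈ Finset.range (m + 1), g (μ + 1) k * g (μ + β) (m - k) := by
    rw [f_eq, f_eq]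
    exact tsum_mul_tsum_eq_tsum_sum_range_of_summable_norm (hnorm _ hμ1) (hnorm _ hμβ)
  have hR : fμ p q a b μ x * fμ p q a b (μ + β + 1) x
      = ∑' m : ℕ, ∑ k ∈ Finset.range (m + 1), g μ k * g (μ + β + 1) (m - k) := by
    rw [f_eq, f_eq]
    exact tsum_mul_tsum_eq_tsum_sum_range_of_summable_norm (hnorm _ hμ) (hnorm _ hμβ1)
  have hSL : Summable (fun m : ℕ =>
      ∑ k ∈ Finset.range (m + 1), g (μ + 1) k * g (μ + β) (m - k)) :=
    (summable_norm_sum_mul_range_of_summable_norm (hnorm _ hμ1) (hnorm _ hμβ)).of_norm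
  have hSR : Summable (fun m : ℕ =>
      ∑ k ∈ Finset.range (m + 1), g μ k * g (μ + β + 1) (m - k)) :=
    (summable_norm_sum_mul_range_of_summable_norm (hnorm _ hμ) (hnorm _ hμβ1)).of_norm
  rw [hL, hR]
  apply Summable.tsum_le_tsum _ hSR hSL
  intro m
  -- coefficientwise inequality
  have coef : ∑ k ∈ Finset.range (m + 1), g (μ + 1) k * g (μ + β) (m - k)
      - ∑ k ∈ Finset.range (m + 1), g μ k * g (μ + β + 1) (m - k)
      = x ^ m * ∑ k ∈ Finset.range (m + 1),
          (cf p q a b μ (k + 1) * cf p q a b (μ + β) (m - k)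
            - cf p q a b μ k * cf p q a b (μ + β) (m - k + 1)) /
            ((k.factorial : ℝ) * ((m - k).factorial : ℝ)) := by
    rw [← Finset.sum_sub_distrib, Finset.mul_sum]
    apply Finset.sum_congr rfl
    intro k hk
    have hkm : k ≤ m := by
      have := Finset.mem_range.mp hk
      omega
    have e1 : cf p q a b (μ + 1) k = cf p q a b μ (k + 1) := by
      rw [cf_shift p q a b ha hb hμ k, ← cf_step p q a b ha hb hμ k]
    have e2 : cf p q a b (μ + β + 1) (m - k) = cf p q a b (μ + β) (m - k + 1) := by
      rw [cf_shift p q a b ha hb hμβ (m - k), ← cf_step p q a b ha hb hμβ (m - k)]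
    simp only [hg]
    rw [e1, e2]
    have hxpow : x ^ k * x ^ (m - k) = x ^ m := by
      rw [← pow_add]
      congr 1
      omega
    field_simp
    rw [← hxpow]
    ring
  have hkey : 0 ≤ ∑ k ∈ Finset.range (m + 1),
      (cf p q a b μ (k + 1) * cf p q a b (μ + β) (m - k)
        - cf p q a b μ k * cf p q a b (μ + β) (m - k + 1)) /
        ((k.factorial : ℝ) * ((m - k).factorial : ℝ)) := by
    apply key_sum m (cf p q a b μ) (cf p q a b (μ + β))
    intro i j hij _
    exact cross_ineq p q a b hpq ha hb hchain hμ hβ hij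
  have := mul_nonneg (pow_nonneg hx m) hkey
  linarith [coef ▸ this]
end analytic

theorem stmt_5 (p q : ℕ) (hpq : p ≤ q) (a b : ℕ → ℝ)
    (ha : ∀ i < p, 0 < a i) (hb : ∀ j < q, 0 < b j)
    (hchain : ∀ j, 1 ≤ j → j ≤ p →
      esymm q b (q - p + j) / esymm p a j ≤ esymm q b (q - p + j - 1) / esymm p a (j - 1)) :
    ∀ (x μ β : ℝ), 0 ≤ x → 0 ≤ μ → 0 ≤ β → ∀ (α : ℕ), 1 ≤ α →
      0 ≤ fμ p q a b (μ + α) x * fμ p q a b (μ + β) x -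
            fμ p q a b μ x * fμ p q a b (μ + α + β) x := by
  intro x μ β hx hμ hβ α hα
  have claim : ∀ α : ℕ, 1 ≤ α → ∀ μ β : ℝ, 0 ≤ μ → 0 ≤ β →
      fμ p q a b μ x * fμ p q a b (μ + α + β) x
        ≤ fμ p q a b (μ + α) x * fμ p q a b (μ + β) x := by
    intro α hα
    induction α, hα using Nat.le_induction with
    | base =>
      intro μ β hμ hβ
      have h := step1 p q a b hpq ha hb hchain hx hμ hβ
      have e1 : μ + ((1:ℕ):ℝ) + β = μ + β + 1 := by push_cast; ring
      have e2 : μ + ((1:ℕ):ℝ) = μ + 1 := by push_cast; ring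
      rw [e1, e2]
      exact h
    | succ k hk ih =>
      intro μ β hμ hβ
      have hk0 : (0:ℝ) ≤ (k:ℝ) := Nat.cast_nonneg k
      have hμk : 0 ≤ μ + k := by linarith
      have ih1 := ih μ β hμ hβ
      have h2 := step1 p q a b hpq ha hb hchain hx hμk hβ
      -- h2 : F(μ+k) * F(μ+k+β+1) ≤ F(μ+k+1) * F(μ+k+β)
      have e1 : μ + ((k:ℝ)+1) + β = μ + (k:ℝ) + β + 1 := by ring
      have e2 : μ + ((k:ℝ)+1) = μ + (k:ℝ) + 1 := by ring
      have e3 : ((k+1:ℕ):ℝ) = (k:ℝ) + 1 := by push_cast; ring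
      rw [e3, e1, e2]
      set F := fun t : ℝ => fμ p q a b t x with hF
      have p1 : 0 < F μ := f_pos p q a b hpq ha hb hchain hμ hx
      have p2 : 0 < F (μ + k) := f_pos p q a b hpq ha hb hchain hμk hx
      have p3 : 0 < F (μ + k + β) := f_pos p q a b hpq ha hb hchain (by linarith) hx
      have p4 : 0 < F (μ + k + β + 1) := f_pos p q a b hpq ha hb hchain (by linarith) hx
      have p5 : 0 < F (μ + k + 1) := f_pos p q a b hpq ha hb hchain (by linarith) hx
      have p6 : 0 < F (μ + β) := f_pos p q a b hpq ha hb hchain (by linarith) hx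
      -- h2 reads : F (μ+k) * F (μ+k+β+1) ≤ F (μ+k+1) * F (μ+k+β)
      -- ih1 reads : F μ * F (μ+k+β) ≤ F (μ+k) * F (μ+β)
      have h3 : (F μ * F (μ + (k:ℝ) + β)) * (F (μ + k) * F (μ + k + β + 1))
          ≤ (F (μ + k) * F (μ + β)) * (F (μ + k + 1) * F (μ + k + β)) := by
        apply mul_le_mul ih1 h2 (by positivity) (by positivity)
      have h4 : (F (μ + k) * F (μ + k + β)) * (F μ * F (μ + (k:ℝ) + β + 1))
          ≤ (F (μ + k) * F (μ + k + β)) * (F (μ + (k:ℝ) + 1) * F (μ + β)) := by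
        nlinarith [h3]
      have hpos : 0 < F (μ + k) * F (μ + k + β) := by positivity
      calc F μ * F (μ + (k:ℝ) + β + 1)
          ≤ F (μ + (k:ℝ) + 1) * F (μ + β) := le_of_mul_le_mul_left h4 hpos
        _ = F (μ + (k:ℝ) + 1) * F (μ + β) := rfl
  have := claim α hα μ β hμ hβ
  linarith
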